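/- Let (X_n) be a sequence of sets, (X,d_X) and (Y,d_Y) metric spaces, and η_n : X_n → X maps such that for every x ∈ X there exist x_n ∈ X_n with η_n(x_n) → x. Let f_n : X_n → Y and f : X → Y be such that for every x ∈ X and every sequence x_n ∈ X_n with η_n(x_n) → x one has f_n(x_n) → f(x). Then f is continuous. -/

import Mathlib

/-!
Given `u k → x`, approximate each `u k` by a discretization `zs k` and follow a diagonal
`n ↦ zs (κ n) n` with `κ → ∞` slowly enough that `η n (zs (κ n) n) → x`. Then `fn n (zs (κ n) n)`
tends to `f x` by hypothesis and stays close to `f (u (κ n))`, so `f ∘ u` converges to `f x` along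
`κ`; as this works for every sequence `u`, `f` is continuous.
-/

open Filter Topology

theorem Filter.exists_tendsto_atTop_diag {α : Type*} {l : Filter α} [l.IsCountablyGenerated]
    (F : ℕ → ℕ → α) (hF : ∀ k, Tendsto (F k) atTop l) :
    ∃ κ : ℕ → ℕ, Tendsto κ atTop atTop ∧ Tendsto (fun n => F (κ n) n) atTop l := by
  obtain ⟨s, hs⟩ := l.exists_antitone_basis
  choose M hM using fun k => eventually_atTop.1 ((hF k).eventually (hs.mem k))
  -- `κ n` is the largest `k ≤ n` such that the rows `0, …, k` are all within their tolerance at `n`.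
  set κ : ℕ → ℕ := fun n => Nat.findGreatest (fun k => ∀ j ≤ k, M j ≤ n) n
  have hκ_ge : ∀ K, ∀ᶠ n in atTop, K ≤ κ n := fun K => by
    filter_upwards [eventually_ge_atTop K,
      (Set.finite_le_nat K).eventually_all.2 fun j _ => eventually_ge_atTop (M j)] with n hKn hMn
    exact Nat.le_findGreatest hKn hMn
  have hκ_mem : ∀ n, M 0 ≤ n → F (κ n) n ∈ s (κ n) := fun n hn =>
    hM _ _ (Nat.findGreatest_spec (P := fun k => ∀ j ≤ k, M j ≤ n) (Nat.zero_le n)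
      (fun j hj => by rwa [Nat.le_zero.1 hj]) _ le_rfl)
  refine ⟨κ, tendsto_atTop.2 hκ_ge, hs.1.tendsto_right_iff.2 fun i _ => ?_⟩
  filter_upwards [hκ_ge i, eventually_ge_atTop (M 0)] with n hi hn
  exact hs.antitone hi (hκ_mem n hn)

theorem continuity_of_limit_along_discretizations
    {X Y : Type*} [MetricSpace X] [MetricSpace Y]
    (Xn : ℕ → Type*) (η : ∀ n, Xn n → X)
    (hdense : ∀ x : X, ∃ xs : ∀ n, Xn n, Tendsto (fun n => η n (xs n)) atTop (𝓝 x))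
    (fn : ∀ n, Xn n → Y) (f : X → Y)
    (hconv : ∀ (x : X) (xs : ∀ n, Xn n),
      Tendsto (fun n => η n (xs n)) atTop (𝓝 x) →
        Tendsto (fun n => fn n (xs n)) atTop (𝓝 (f x))) :
    Continuous f := by
  refine continuous_iff_continuousAt.2 fun x => tendsto_of_subseq_tendsto fun u hu => ?_
  choose zs hzs using fun k => hdense (u k)
  obtain ⟨κ, hκ, hdiag⟩ := exists_tendsto_atTop_diag (l := 𝓝 (0, 0))
    (fun k n => (dist (η n (zs k n)) (u k), dist (fn n (zs k n)) (f (u k)))) fun k =>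
      (tendsto_iff_dist_tendsto_zero.1 (hzs k)).prodMk_nhds
        (tendsto_iff_dist_tendsto_zero.1 (hconv _ _ (hzs k)))
  have hη : Tendsto (fun n => η n (zs (κ n) n)) atTop (𝓝 x) :=
    (hu.comp hκ).congr_dist (hdiag.fst_nhds.congr fun _ => dist_comm _ _)
  exact ⟨κ, (hconv x _ hη).congr_dist hdiag.snd_nhds⟩
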